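/- arXiv:math/0512567 — 8 statements merged into one kernel-verified Lean document; each statement's English description precedes it below -/
import Mathlib

section
/- Let n ≥ 3 and let P_n' denote the commutative semigroup whose elements are the proper subsets of {1,…,n} with multiplication given by intersection (so the empty set is the zero element). If S is a commutative zero-divisor semigroup whose zero-divisor graph Γ(S) is isomorphic (as a simple graph) to Γ_n, then S is isomorphic as a semigroup to P_n'. -/
/-- A commutative semigroup with a (left- and right-) absorbing zero element. -/
class CommSemigroupWithZero (S : Type*) extends CommSemigroup S, MulZeroClass S

/-- A zero-divisor semigroup: every element is annihilated by some nonzero element. -/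
def IsZeroDivisorSemigroup (S : Type*) [CommSemigroupWithZero S] : Prop :=
  ∀ s : S, ∃ t : S, t ≠ 0 ∧ s * t = 0

/-- The zero-divisor graph Γ(S): vertices are the nonzero zero-divisors, distinct
vertices are adjacent iff their product is zero. -/
def zdGraph (S : Type*) [CommSemigroupWithZero S] :
    SimpleGraph {s : S // s ≠ 0 ∧ ∃ t : S, t ≠ 0 ∧ s * t = 0} where
  Adj x y := x ≠ y ∧ (x : S) * y = 0
  symm := ⟨by
    rintro x y ⟨h1, h2⟩
    exact ⟨h1.symm, by rwa [mul_comm]⟩⟩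
  loopless := ⟨fun x h => h.1 rfl⟩
/-- Vertices of Γₙ: nonempty proper subsets of {1,…,n}. -/
def GammaVert (n : ℕ) := {B : Finset (Fin n) // B.Nonempty ∧ B ≠ Finset.univ}

/-- The graph Γₙ: two distinct nonempty proper subsets adjacent iff disjoint. -/
def GammaGraph (n : ℕ) : SimpleGraph (GammaVert n) where
  Adj B C := B ≠ C ∧ Disjoint B.1 C.1
  symm := ⟨fun _ _ ⟨h1, h2⟩ => ⟨h1.symm, h2.symm⟩⟩
  loopless := ⟨fun _ h => h.1 rfl⟩

/-- The semigroup `Pₙ - {1}`: proper subsets of {1,…,n} under intersection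
(the empty set is the zero element). -/
def PropSubset (n : ℕ) := {B : Finset (Fin n) // B ≠ Finset.univ}

instance (n : ℕ) : Mul (PropSubset n) :=
  ⟨fun B C => ⟨B.1 ∩ C.1, by
    intro h
    have := Finset.inter_subset_left (s₁ := B.1) (s₂ := C.1)
    rw [h] at this
    exact B.2 (Finset.univ_subset_iff.mp this)⟩⟩

/-!
Transport the graph isomorphism to a labelling `A : S → Finset (Fin n)` with `A 0 = ∅`; it is
a bijection onto the proper subsets, and distinct nonzero `s, t` satisfy `s * t = 0` exactly when
their labels are disjoint. Let `e i` be the element labelled `{i}`. Multiplying by `e j` lands in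
`{0, e j}`: anything else would be some `e q` with `q ≠ j`, yet it is killed by the element
labelled `{j}ᶜ`, which `e q` is not. If `e j * e j` were `0`, the product of the elements
labelled `{j, p}` and `{j, r}` would fix `e j` and kill every other `e m`, forcing it to be `e j`;
so each `e j` is idempotent. Hence `x * e i` is `e i` or `0` according as `i ∈ A x` or not, so
`A x = {i | x * e i ≠ 0}`, and that description is visibly multiplicative.
-/

open Finset Function

section ThreeElements

variable {α : Type*} [Fintype α] [DecidableEq α]

lemma exists_ne_ne_of_three_le_card (hα : 3 ≤ Fintype.card α) (a b : α) :
    ∃ c, c ≠ a ∧ c ≠ b := by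
  obtain ⟨c, -, hc⟩ := exists_mem_notMem_of_card_lt_card (s := {a, b}) (t := univ)
    (card_le_two.trans_lt (by rwa [card_univ]))
  simp only [mem_insert, mem_singleton, not_or] at hc
  exact ⟨c, hc⟩

lemma pair_ne_univ_of_three_le_card (hα : 3 ≤ Fintype.card α) (a b : α) :
    ({a, b} : Finset α) ≠ univ := by
  obtain ⟨c, hca, hcb⟩ := exists_ne_ne_of_three_le_card hα a b
  exact fun h => by simpa [hca, hcb] using eq_univ_iff_forall.1 h c

end ThreeElements

/-- An isomorphism `Γ(S) ≃g Γ_α`, read as a labelling of `S` by subsets of `α`, extended by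
`0 ↦ ∅`. -/
structure IsDisjointnessLabeling {S α : Type*} [CommSemigroupWithZero S] [Fintype α]
    (A : S → Finset α) : Prop where
  injective : Injective A
  map_zero : A 0 = ∅
  ne_univ : ∀ s, A s ≠ univ
  exists_eq : ∀ B, B ≠ univ → ∃ s, A s = B
  mul_eq_zero_iff : ∀ {s t}, s ≠ 0 → t ≠ 0 → s ≠ t → (s * t = 0 ↔ Disjoint (A s) (A t))

noncomputable def atom {S α : Type*} [Zero S] (A : S → Finset α) (i : α) : S :=
  invFun A {i}

namespace IsDisjointnessLabeling

variable {S α : Type*} [CommSemigroupWithZero S] [Fintype α]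
  {A : S → Finset α} (hA : IsDisjointnessLabeling A)
include hA

lemma ne_zero_of_mem {s : S} {i : α} (hi : i ∈ A s) : s ≠ 0 := by
  rintro rfl
  simp [hA.map_zero] at hi

lemma nonempty {s : S} (hs : s ≠ 0) : (A s).Nonempty :=
  nonempty_iff_ne_empty.2 fun h => hs (hA.injective (h.trans hA.map_zero.symm))

lemma mul_ne_zero_of_mem_of_mem {s t : S} {i : α} (hst : s ≠ t) (hs : i ∈ A s) (ht : i ∈ A t) :
    s * t ≠ 0 := fun h =>
  disjoint_left.1 ((hA.mul_eq_zero_iff (hA.ne_zero_of_mem hs) (hA.ne_zero_of_mem ht) hst).1 h) hs ht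

variable [DecidableEq α] (hα : 3 ≤ Fintype.card α)
include hα

lemma A_atom (i : α) : A (atom A i) = {i} := by
  obtain ⟨c, hci, -⟩ := exists_ne_ne_of_three_le_card hα i i
  exact invFun_eq (hA.exists_eq {i} fun h => by simpa [hci] using eq_univ_iff_forall.1 h c)

lemma atom_ne_zero (i : α) : atom A i ≠ 0 :=
  hA.ne_zero_of_mem (i := i) (by simp [hA.A_atom hα])

lemma ne_atom_of_mem {s : S} {i j : α} (hi : i ∈ A s) (hij : i ≠ j) : s ≠ atom A j := by
  rintro rfl
  simp [hA.A_atom hα, hij] at hi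

lemma atom_mul_atom {i j : α} (hij : i ≠ j) : atom A i * atom A j = 0 :=
  (hA.mul_eq_zero_iff (hA.atom_ne_zero hα i) (hA.atom_ne_zero hα j)
    (hA.ne_atom_of_mem hα (by simp [hA.A_atom hα]) hij)).2 (by simpa [hA.A_atom hα])

lemma mul_atom_of_notMem {s : S} {i : α} (hi : i ∉ A s) : s * atom A i = 0 := by
  rcases eq_or_ne s 0 with rfl | hs
  · exact zero_mul _
  refine (hA.mul_eq_zero_iff hs (hA.atom_ne_zero hα i) ?_).2 (by simpa [hA.A_atom hα])
  rintro rfl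
  simp [hA.A_atom hα] at hi

lemma eq_atom_of_mul_atom_eq_zero {s : S} {i : α} (hi : i ∈ A s) (h : s * atom A i = 0) :
    s = atom A i := by
  by_contra hne
  exact hA.mul_ne_zero_of_mem_of_mem hne hi (by simp [hA.A_atom hα]) h

lemma eq_atom_of_subset {s : S} {j : α} (hs : s ≠ 0) (h : A s ⊆ {j}) : s = atom A j :=
  hA.injective <| by
    rw [hA.A_atom hα]
    exact (subset_singleton_iff.1 h).resolve_left (hA.nonempty hs).ne_empty

lemma mul_atom_eq_zero_or_eq (x : S) (j : α) : x * atom A j = 0 ∨ x * atom A j = atom A j := by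
  rcases eq_or_ne (x * atom A j) 0 with h | hy
  · exact .inl h
  refine .inr (hA.eq_atom_of_subset hα hy fun q hq => mem_singleton.2 (by_contra fun hqj => ?_))
  have hy_eq : x * atom A j = atom A q := hA.eq_atom_of_mul_atom_eq_zero hα hq
    (by rw [mul_assoc, hA.atom_mul_atom hα (Ne.symm hqj), mul_zero])
  obtain ⟨c, hc⟩ := hA.exists_eq {j}ᶜ ((compl_ne_univ_iff_nonempty _).2 (singleton_nonempty j))
  obtain ⟨r, hrj, hrq⟩ := exists_ne_ne_of_three_le_card hα j q
  have hjc : atom A j * c = 0 :=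
    (hA.mul_eq_zero_iff (hA.atom_ne_zero hα j) (hA.ne_zero_of_mem (i := q) (by simpa [hc]))
      (hA.ne_atom_of_mem hα (by simpa [hc]) hqj).symm).2 (by simp [hA.A_atom hα, hc])
  have hqc : atom A q * c ≠ 0 :=
    hA.mul_ne_zero_of_mem_of_mem (i := q) (hA.ne_atom_of_mem hα (by simpa [hc]) hrq).symm
      (by simp [hA.A_atom hα]) (by simpa [hc])
  exact hqc (by rw [← hy_eq, mul_assoc, hjc, mul_zero])

lemma mul_atom_of_mem_of_ne {s : S} {i : α} (hi : i ∈ A s) (hne : s ≠ atom A i) :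
    s * atom A i = atom A i :=
  (hA.mul_atom_eq_zero_or_eq hα s i).resolve_left
    (hA.mul_ne_zero_of_mem_of_mem hne hi (by simp [hA.A_atom hα]))

lemma eq_atom_of_mul_atom {z : S} {j : α} (hj : z * atom A j = atom A j)
    (hm : ∀ m ≠ j, z * atom A m = 0) : z = atom A j := by
  have hz : z ≠ 0 := by
    rintro rfl
    exact hA.atom_ne_zero hα j (by rw [← hj, zero_mul])
  refine hA.eq_atom_of_subset hα hz fun m hmz => mem_singleton.2 (by_contra fun hmj => ?_)
  rw [hA.eq_atom_of_mul_atom_eq_zero hα hmz (hm m hmj), hA.atom_mul_atom hα hmj] at hj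
  exact hA.atom_ne_zero hα j hj.symm

lemma atom_mul_self (j : α) : atom A j * atom A j = atom A j := by
  refine (hA.mul_atom_eq_zero_or_eq hα _ j).resolve_left fun hjj => ?_
  obtain ⟨p, hpj, -⟩ := exists_ne_ne_of_three_le_card hα j j
  obtain ⟨r, hrj, hrp⟩ := exists_ne_ne_of_three_le_card hα j p
  obtain ⟨s, hs⟩ := hA.exists_eq {j, p} (pair_ne_univ_of_three_le_card hα j p)
  obtain ⟨t, ht⟩ := hA.exists_eq {j, r} (pair_ne_univ_of_three_le_card hα j r)
  have hsj : s * atom A j = atom A j := hA.mul_atom_of_mem_of_ne hα (by simp [hs])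
    (hA.ne_atom_of_mem hα (i := p) (by simp [hs]) hpj)
  have htj : t * atom A j = atom A j := hA.mul_atom_of_mem_of_ne hα (by simp [ht])
    (hA.ne_atom_of_mem hα (i := r) (by simp [ht]) hrj)
  have hst : s * t * atom A j = atom A j := by rw [mul_assoc, htj, hsj]
  have hkill : ∀ m ≠ j, s * t * atom A m = 0 := by
    intro m hmj
    by_cases hmp : m = p
    · have : m ∉ A t := by simp [ht, hmp, hpj, Ne.symm hrp]
      rw [mul_assoc, hA.mul_atom_of_notMem hα this, mul_zero]
    · have : m ∉ A s := by simp [hs, hmj, hmp]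
      rw [mul_comm s, mul_assoc, hA.mul_atom_of_notMem hα this, mul_zero]
  rw [hA.eq_atom_of_mul_atom hα hst hkill, hjj] at hst
  exact hA.atom_ne_zero hα j hst.symm

lemma mul_atom_eq_ite (x : S) (i : α) :
    x * atom A i = if i ∈ A x then atom A i else 0 := by
  split_ifs with hi
  · rcases eq_or_ne x (atom A i) with rfl | hne
    · exact hA.atom_mul_self hα i
    · exact hA.mul_atom_of_mem_of_ne hα hi hne
  · exact hA.mul_atom_of_notMem hα hi

lemma mem_iff_mul_atom_ne_zero (x : S) (i : α) : i ∈ A x ↔ x * atom A i ≠ 0 := by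
  rw [hA.mul_atom_eq_ite hα]
  split_ifs with hi <;> simp [hi, hA.atom_ne_zero hα]

theorem map_mul (x y : S) : A (x * y) = A x ∩ A y := by
  ext i
  rw [mem_inter, hA.mem_iff_mul_atom_ne_zero hα, hA.mem_iff_mul_atom_ne_zero hα,
    hA.mem_iff_mul_atom_ne_zero hα, mul_assoc, hA.mul_atom_eq_ite hα y]
  split_ifs <;> simp [hA.atom_ne_zero hα]

end IsDisjointnessLabeling

noncomputable def IsDisjointnessLabeling.mulEquiv {n : ℕ} {S : Type*} [CommSemigroupWithZero S]
    {A : S → Finset (Fin n)} (hA : IsDisjointnessLabeling A) (hn : 3 ≤ n) : S ≃* PropSubset n where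
  toEquiv := Equiv.ofBijective (fun s => ⟨A s, hA.ne_univ s⟩) <| by
    refine ⟨fun s t h => hA.injective (congrArg Subtype.val h), fun B => ?_⟩
    obtain ⟨s, hs⟩ := hA.exists_eq B.1 B.2
    exact ⟨s, Subtype.ext hs⟩
  map_mul' x y := Subtype.ext (hA.map_mul (by simpa using hn) x y)

section ZeroDivisorGraph

variable {n : ℕ} {S : Type*} [CommSemigroupWithZero S] (hS : IsZeroDivisorSemigroup S)
  (φ : zdGraph S ≃g GammaGraph n)

def zdVertex (s : S) (hs : s ≠ 0) : {s : S // s ≠ 0 ∧ ∃ t : S, t ≠ 0 ∧ s * t = 0} :=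
  ⟨s, hs, hS s⟩

open Classical in
noncomputable def gammaLabel (s : S) : Finset (Fin n) :=
  if hs : s = 0 then ∅ else (φ (zdVertex hS s hs)).1

lemma gammaLabel_of_ne_zero {s : S} (hs : s ≠ 0) :
    gammaLabel hS φ s = (φ (zdVertex hS s hs)).1 :=
  dif_neg hs

lemma gammaLabel_eq_empty_iff {s : S} : gammaLabel hS φ s = ∅ ↔ s = 0 := by
  refine ⟨fun h => by_contra fun hs => ?_, fun h => dif_pos h⟩
  rw [gammaLabel_of_ne_zero hS φ hs] at h
  exact (φ (zdVertex hS s hs)).2.1.ne_empty h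

theorem isDisjointnessLabeling_gammaLabel (hn : n ≠ 0) :
    IsDisjointnessLabeling (gammaLabel hS φ) where
  injective s t h := by
    by_cases hs : s = 0
    · rw [hs, eq_comm, ← gammaLabel_eq_empty_iff hS φ, ← h, gammaLabel_eq_empty_iff hS φ, hs]
    by_cases ht : t = 0
    · rw [ht, ← gammaLabel_eq_empty_iff hS φ, h, gammaLabel_eq_empty_iff hS φ, ht]
    rw [gammaLabel_of_ne_zero hS φ hs, gammaLabel_of_ne_zero hS φ ht] at h
    exact congrArg Subtype.val (φ.injective (Subtype.ext h))
  map_zero := dif_pos rfl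
  ne_univ s := by
    by_cases hs : s = 0
    · rw [(gammaLabel_eq_empty_iff hS φ).2 hs]
      exact (univ_nonempty_iff.2 ⟨⟨0, Nat.pos_of_ne_zero hn⟩⟩).ne_empty.symm
    · rw [gammaLabel_of_ne_zero hS φ hs]
      exact (φ (zdVertex hS s hs)).2.2
  exists_eq B hB := by
    obtain rfl | hB₀ := B.eq_empty_or_nonempty
    · exact ⟨0, dif_pos rfl⟩
    set v := φ.symm ⟨B, hB₀, hB⟩
    refine ⟨v.1, ?_⟩
    rw [gammaLabel_of_ne_zero hS φ v.2.1]
    exact congrArg Subtype.val (φ.apply_symm_apply _)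
  mul_eq_zero_iff {s t} hs ht hst := by
    have hv : zdVertex hS s hs ≠ zdVertex hS t ht := fun h => hst (congrArg Subtype.val h)
    rw [gammaLabel_of_ne_zero hS φ hs, gammaLabel_of_ne_zero hS φ ht]
    calc s * t = 0 ↔ (zdGraph S).Adj (zdVertex hS s hs) (zdVertex hS t ht) :=
          (and_iff_right hv).symm
      _ ↔ (GammaGraph n).Adj (φ (zdVertex hS s hs)) (φ (zdVertex hS t ht)) := φ.map_adj_iff.symm
      _ ↔ _ := and_iff_right (φ.injective.ne hv)

end ZeroDivisorGraph

/-- **Theorem 2.2.** For n ≥ 3, any commutative zero-divisor semigroup whose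
zero-divisor graph is isomorphic to Γₙ is isomorphic, as a semigroup, to the
semigroup of proper subsets of {1,…,n} under intersection. -/
theorem gamma_n_determines_semigroup (n : ℕ) (hn : 3 ≤ n)
    (S : Type*) [CommSemigroupWithZero S] (hS : IsZeroDivisorSemigroup S)
    (h : Nonempty (zdGraph S ≃g GammaGraph n)) :
    Nonempty (S ≃* PropSubset n) := by
  obtain ⟨φ⟩ := h
  exact ⟨(isDisjointnessLabeling_gammaLabel hS φ (by omega)).mulEquiv hn⟩
end

section
/- For every n ≥ 2, the number of edges of the graph Γ_n equals (∑_{i=1}^{n−1} C(n,i)·2^{n−1−i}) − 2^{n−1} + 1, where C(n,i) is the binomial coefficient. -/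
/-!
The neighbours of a vertex `B` of Γₙ are exactly the nonempty subsets of `Bᶜ`, so
`deg B + 1 = 2 ^ (n - |B|)`. Summing over `B` grouped by `|B| = i` and using the handshake lemma
gives `2 |E| + (2ⁿ - 2) = ∑ C(n,i) 2^(n-i)`; halving yields the formula.
-/

open Finset

theorem Finset.nonempty_and_ne_univ_iff_card_mem_Icc {α : Type*} [Fintype α] (S : Finset α) :
    S.Nonempty ∧ S ≠ univ ↔ #S ∈ Icc 1 (Fintype.card α - 1) := by
  rw [← card_pos, ← card_lt_iff_ne_univ, mem_Icc]
  omega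

namespace GammaVert

variable {n : ℕ}

instance : Fintype (GammaVert n) :=
  inferInstanceAs (Fintype {B : Finset (Fin n) // B.Nonempty ∧ B ≠ univ})

instance : DecidableEq (GammaVert n) :=
  inferInstanceAs (DecidableEq {B : Finset (Fin n) // B.Nonempty ∧ B ≠ univ})

def toFinset : GammaVert n ↪ Finset (Fin n) := Function.Embedding.subtype _

@[simp]
theorem toFinset_apply (B : GammaVert n) : toFinset B = B.1 :=
  rfl

theorem card_filter_card_eq {i : ℕ} (hi : i ∈ Icc 1 (n - 1)) :
    #({B | #B.1 = i} : Finset (GammaVert n)) = n.choose i := by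
  have hmap : ({B | #B.1 = i} : Finset (GammaVert n)).map toFinset =
      powersetCard i univ := by
    ext S
    simp only [mem_map, mem_filter, mem_univ, true_and, toFinset_apply,
      mem_powersetCard, subset_univ]
    constructor
    · rintro ⟨B, hB, rfl⟩
      exact hB
    · rintro rfl
      refine ⟨⟨S, (nonempty_and_ne_univ_iff_card_mem_Icc S).2 ?_⟩, rfl, rfl⟩
      rwa [Fintype.card_fin]
  rw [← card_map, hmap, card_powersetCard, card_univ, Fintype.card_fin]

theorem sum_apply_card {M : Type*} [AddCommMonoid M] (f : ℕ → M) :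
    ∑ B : GammaVert n, f #B.1 = ∑ i ∈ Icc 1 (n - 1), n.choose i • f i := by
  have hmaps : ∀ B ∈ (univ : Finset (GammaVert n)), #B.1 ∈ Icc 1 (n - 1) := fun B _ => by
    simpa only [Fintype.card_fin] using (nonempty_and_ne_univ_iff_card_mem_Icc B.1).1 B.2
  rw [← sum_fiberwise_of_maps_to hmaps]
  refine sum_congr rfl fun i hi => ?_
  rw [sum_congr rfl fun B hB => congrArg f (mem_filter.1 hB).2, sum_const,
    card_filter_card_eq hi]

theorem card_add_two (hn : 1 ≤ n) : Fintype.card (GammaVert n) + 2 = 2 ^ n := by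
  have hcompl : ({S | ¬(S.Nonempty ∧ S ≠ univ)} : Finset (Finset (Fin n))) = {∅, univ} := by
    ext S
    simp only [mem_filter, mem_univ, true_and, mem_insert, mem_singleton,
      ← not_nonempty_iff_eq_empty]
    tauto
  have hne : (∅ : Finset (Fin n)) ≠ univ :=
    (univ_nonempty_iff.2 (Fin.pos_iff_nonempty.1 hn)).ne_empty.symm
  calc Fintype.card (GammaVert n) + 2
      = #({S | S.Nonempty ∧ S ≠ univ} : Finset (Finset (Fin n))) + #{∅, univ} := by
        rw [card_pair hne]
        exact congrArg (· + 2) (Fintype.card_subtype _)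
    _ = 2 ^ n := by
        rw [← hcompl, card_filter_add_card_filter_not, card_univ, Fintype.card_finset,
          Fintype.card_fin]

end GammaVert

namespace GammaGraph

open GammaVert

variable {n : ℕ}

theorem adj_iff {B C : GammaVert n} : (GammaGraph n).Adj B C ↔ B ≠ C ∧ Disjoint B.1 C.1 :=
  Iff.rfl

instance : DecidableRel (GammaGraph n).Adj := fun _ _ => decidable_of_iff' _ adj_iff

theorem map_neighborFinset (B : GammaVert n) :
    ((GammaGraph n).neighborFinset B).map toFinset =
      (B.1ᶜ.powerset).erase ∅ := by
  ext S
  simp only [mem_map, SimpleGraph.mem_neighborFinset, adj_iff, toFinset_apply,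
    mem_erase, mem_powerset, subset_compl_iff_disjoint_left, ← nonempty_iff_ne_empty]
  constructor
  · rintro ⟨C, ⟨-, hBC⟩, rfl⟩
    exact ⟨C.2.1, hBC⟩
  · rintro ⟨hS, hBS⟩
    have hSne : S ≠ univ := by
      rintro rfl
      exact B.2.1.ne_empty (disjoint_top.1 hBS)
    refine ⟨⟨S, hS, hSne⟩, ⟨?_, hBS⟩, rfl⟩
    rintro rfl
    exact hS.ne_empty (disjoint_self.1 hBS)

theorem degree_add_one (B : GammaVert n) : (GammaGraph n).degree B + 1 = 2 ^ (n - #B.1) := by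
  rw [← SimpleGraph.card_neighborFinset_eq_degree, ← card_map, map_neighborFinset,
    card_erase_add_one (empty_mem_powerset _), card_powerset, card_compl, Fintype.card_fin]

theorem one_le_degree (B : GammaVert n) : 1 ≤ (GammaGraph n).degree B := by
  have hB : #B.1 < n := by simpa using (card_lt_iff_ne_univ _).2 B.2.2
  have h2 : 2 ≤ 2 ^ (n - #B.1) := Nat.le_self_pow (by omega) 2
  have := degree_add_one B
  omega

theorem card_le_two_mul_card_edges :
    Fintype.card (GammaVert n) ≤ 2 * #(GammaGraph n).edgeFinset := by
  rw [← SimpleGraph.sum_degrees_eq_twice_card_edges, Fintype.card_eq_sum_ones]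
  exact sum_le_sum fun B _ => one_le_degree B

theorem two_mul_card_edges_add_card :
    2 * #(GammaGraph n).edgeFinset + Fintype.card (GammaVert n) =
      2 * ∑ i ∈ Icc 1 (n - 1), n.choose i * 2 ^ (n - 1 - i) :=
  calc 2 * #(GammaGraph n).edgeFinset + Fintype.card (GammaVert n)
      = ∑ B : GammaVert n, ((GammaGraph n).degree B + 1) := by
        rw [sum_add_distrib, SimpleGraph.sum_degrees_eq_twice_card_edges,
          Fintype.card_eq_sum_ones]
    _ = ∑ B : GammaVert n, 2 ^ (n - #B.1) := sum_congr rfl fun B _ => degree_add_one B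
    _ = ∑ i ∈ Icc 1 (n - 1), n.choose i • 2 ^ (n - i) := sum_apply_card (fun i => 2 ^ (n - i))
    _ = 2 * ∑ i ∈ Icc 1 (n - 1), n.choose i * 2 ^ (n - 1 - i) := by
        rw [mul_sum]
        refine sum_congr rfl fun i hi => ?_
        rw [mem_Icc] at hi
        rw [smul_eq_mul, show n - i = n - 1 - i + 1 by omega, pow_succ]
        ring

end GammaGraph

/-- The number of edges of Γₙ is (∑_{i=1}^{n−1} C(n,i)·2^{n−1−i}) − 2^{n−1} + 1. -/
theorem gammaGraph_card_edges (n : ℕ) (hn : 2 ≤ n) :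
    Nat.card (GammaGraph n).edgeSet =
      (∑ i ∈ Finset.Icc 1 (n - 1), n.choose i * 2 ^ (n - 1 - i)) - 2 ^ (n - 1) + 1 := by
  have hsum := GammaGraph.two_mul_card_edges_add_card (n := n)
  have hvert := GammaVert.card_add_two (n := n) (by omega)
  have hpow : 2 ^ n = 2 * 2 ^ (n - 1) := by rw [← pow_succ']; congr 1; omega
  -- these two guarantee that the truncated subtraction in the formula does not cut off
  have hle := GammaGraph.card_le_two_mul_card_edges (n := n)
  have htwo : 2 ≤ 2 ^ (n - 1) := Nat.le_self_pow (by omega) 2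
  rw [Nat.card_eq_fintype_card, SimpleGraph.card_edgeSet]
  omega
end

section
/- For every n ≥ 3, the diameter of the graph Γ_n (the maximum over all pairs of vertices of the length of a shortest path joining them) equals 3. -/
/-!
Any two distinct vertices `u ≠ v` have complements `uᶜ ≠ vᶜ` that are nonempty, so one can pick
`x ∉ u` and `y ∉ v` with `x ≠ y`; then `u — {x} — {y} — v` is a walk, and the diameter is at most 3.
Conversely, a common neighbour of `{x}ᶜ` and `{y}ᶜ` would have to avoid `{x}ᶜ ∪ {y}ᶜ`, which is
everything, and for `n ≥ 3` these two sets also meet, so their distance is at least 3.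
-/

theorem Finset.exists_mem_mem_ne_of_ne {α : Type*} {s t : Finset α} (hs : s.Nonempty)
    (ht : t.Nonempty) (hst : s ≠ t) : ∃ x ∈ s, ∃ y ∈ t, x ≠ y := by
  by_contra! h
  obtain ⟨a, ha⟩ := hs
  have hsa : s = {a} := Finset.Nonempty.subset_singleton_iff ⟨a, ha⟩ |>.mp fun x hx =>
    ht.elim fun y hy => Finset.mem_singleton.2 <| (h x hx y hy).trans (h a ha y hy).symm
  have hta : t = {a} := ht.subset_singleton_iff.mp fun y hy =>
    Finset.mem_singleton.2 (h a ha y hy).symm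
  exact hst (hsa.trans hta.symm)

theorem Finset.compl_nonempty_of_ne_univ {α : Type*} [Fintype α] [DecidableEq α]
    {s : Finset α} (h : s ≠ univ) : sᶜ.Nonempty :=
  Finset.nonempty_iff_ne_empty.2 (by simpa using h)

namespace GammaVert

variable {n : ℕ}

def single (hn : 2 ≤ n) (x : Fin n) : GammaVert n :=
  haveI := Fin.nontrivial_iff_two_le.2 hn
  ⟨{x}, Finset.singleton_nonempty x, Finset.singleton_ne_univ x⟩

def coSingle (hn : 2 ≤ n) (x : Fin n) : GammaVert n :=
  haveI := Fin.nontrivial_iff_two_le.2 hn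
  ⟨{x}ᶜ, Finset.compl_nonempty_of_ne_univ (Finset.singleton_ne_univ x), by simp⟩

end GammaVert

namespace GammaGraph

open SimpleGraph

variable {n : ℕ}

theorem adj_of_disjoint {u v : GammaVert n} (h : Disjoint u.1 v.1) : (GammaGraph n).Adj u v :=
  ⟨fun huv => u.2.1.ne_empty (disjoint_self.mp (huv ▸ h)), h⟩

theorem edist_le_three (hn : 2 ≤ n) (u v : GammaVert n) : (GammaGraph n).edist u v ≤ 3 := by
  rcases eq_or_ne u v with rfl | huv
  · simp
  have hcompl : u.1ᶜ ≠ v.1ᶜ := compl_injective.ne (Subtype.val_injective.ne huv)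
  obtain ⟨x, hx, y, hy, hxy⟩ := Finset.exists_mem_mem_ne_of_ne
    (Finset.compl_nonempty_of_ne_univ u.2.2) (Finset.compl_nonempty_of_ne_univ v.2.2) hcompl
  have hux : (GammaGraph n).Adj u (.single hn x) :=
    adj_of_disjoint (by simpa [GammaVert.single] using Finset.mem_compl.1 hx)
  have hxy : (GammaGraph n).Adj (.single hn x) (.single hn y) :=
    adj_of_disjoint (by simpa [GammaVert.single] using hxy)
  have hyv : (GammaGraph n).Adj (.single hn y) v :=
    adj_of_disjoint (by simpa [GammaVert.single] using Finset.mem_compl.1 hy)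
  simpa using (Walk.cons hux (.cons hxy (.cons hyv .nil))).edist_le

theorem two_lt_edist {u v : GammaVert n} (hmeet : ¬Disjoint u.1 v.1)
    (hcover : u.1 ∪ v.1 = Finset.univ) : 2 < (GammaGraph n).edist u v := by
  refine two_lt_edist_iff.2 ⟨?_, fun h => hmeet h.2, ?_⟩
  · rintro rfl
    exact u.2.2 (by simpa using hcover)
  · refine Set.eq_empty_of_forall_notMem fun w hw => ?_
    obtain ⟨huw, hvw⟩ := (mem_commonNeighbors _).1 hw
    obtain ⟨x, hx⟩ := w.2.1
    have hxu : x ∉ u.1 := Finset.disjoint_right.1 huw.2 hx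
    have hxv : x ∉ v.1 := Finset.disjoint_right.1 hvw.2 hx
    simpa [hxu, hxv] using hcover.ge (Finset.mem_univ x)

theorem two_lt_edist_coSingle (hn : 2 ≤ n) {x y z : Fin n} (hxy : x ≠ y) (hzx : z ≠ x)
    (hzy : z ≠ y) : 2 < (GammaGraph n).edist (.coSingle hn x) (.coSingle hn y) := by
  refine two_lt_edist (Finset.not_disjoint_iff.2 ⟨z, ?_, ?_⟩) ?_ <;>
    simp [GammaVert.coSingle, Finset.eq_univ_iff_forall, *]
  exact fun w => not_and_or.1 fun h => hxy (h.1.symm.trans h.2)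

end GammaGraph

/-- For n ≥ 3, the diameter of Γₙ is 3. -/
theorem gammaGraph_diam (n : ℕ) (hn : 3 ≤ n) :
    (GammaGraph n).diam = 3 := by
  have hn2 : 2 ≤ n := by omega
  have hfar := GammaGraph.two_lt_edist_coSingle hn2 (x := ⟨0, by omega⟩) (y := ⟨1, by omega⟩)
    (z := ⟨2, by omega⟩) (by simp) (by simp) (by simp)
  have hediam : (GammaGraph n).ediam = 3 :=
    le_antisymm (SimpleGraph.ediam_le_of_edist_le (GammaGraph.edist_le_three hn2))
      ((Order.add_one_le_of_lt hfar).trans SimpleGraph.edist_le_ediam)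
  simp [SimpleGraph.diam, hediam]
end

section
/- For every n ≥ 3, the graph Γ_n has exactly n end vertices (vertices of degree 1), namely the subsets of {1,…,n} of cardinality n − 1. -/
open Finset

theorem Finset.card_nonempty_subsets {α : Type*} (s : Finset α) :
    Nat.card {t : Finset α // t.Nonempty ∧ t ⊆ s} = 2 ^ #s - 1 := by
  classical
  have hmem : ∀ t, t ∈ s.powerset.erase ∅ ↔ t.Nonempty ∧ t ⊆ s := by
    simp [nonempty_iff_ne_empty]
  rw [← Nat.card_congr (Equiv.subtypeEquivRight hmem), Nat.card_eq_finsetCard,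
    card_erase_of_mem (empty_mem_powerset s), card_powerset]

namespace GammaVert

variable {n : ℕ}

theorem card_lt (B : GammaVert n) : #B.1 < n := by
  simpa using card_lt_card (ssubset_univ_iff.mpr B.2.2)

theorem compl_ne_univ (B : GammaVert n) : B.1ᶜ ≠ univ := by
  simpa [compl_eq_univ_iff] using B.2.1.ne_empty

def equivCardEq {k : ℕ} (hk0 : 0 < k) (hkn : k < n) :
    {B : GammaVert n // #B.1 = k} ≃ {s : Finset (Fin n) // #s = k} where
  toFun B := ⟨B.1.1, B.2⟩
  invFun s := ⟨⟨s.1, card_pos.mp (s.2.symm ▸ hk0), fun h => by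
    have := s.2
    rw [h, card_univ, Fintype.card_fin] at this
    omega⟩, s.2⟩
  left_inv _ := rfl
  right_inv _ := rfl

theorem card_cardEq {k : ℕ} (hk0 : 0 < k) (hkn : k < n) :
    Nat.card {B : GammaVert n // #B.1 = k} = n.choose k := by
  rw [Nat.card_congr (equivCardEq hk0 hkn), Nat.card_eq_fintype_card, Fintype.card_finset_len,
    Fintype.card_fin]

end GammaVert

namespace GammaGraph

variable {n : ℕ}

theorem adj_iff_subset_compl {B C : GammaVert n} : (GammaGraph n).Adj B C ↔ C.1 ⊆ B.1ᶜ := by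
  rw [subset_compl_iff_disjoint_left]
  refine ⟨And.right, fun h => ⟨?_, h⟩⟩
  rintro rfl
  exact B.2.1.ne_empty (disjoint_self.mp h)

def neighborSetEquiv (B : GammaVert n) :
    (GammaGraph n).neighborSet B ≃ {C : Finset (Fin n) // C.Nonempty ∧ C ⊆ B.1ᶜ} where
  toFun C := ⟨C.1.1, C.1.2.1, adj_iff_subset_compl.mp C.2⟩
  invFun C := ⟨⟨C.1, C.2.1, fun h => B.compl_ne_univ (univ_subset_iff.mp (h.symm.subset.trans C.2.2))⟩,
    adj_iff_subset_compl.mpr C.2.2⟩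
  left_inv _ := rfl
  right_inv _ := rfl

theorem card_neighborSet (B : GammaVert n) :
    Nat.card ((GammaGraph n).neighborSet B) = 2 ^ (n - #B.1) - 1 := by
  rw [Nat.card_congr (neighborSetEquiv B), card_nonempty_subsets, card_compl, Fintype.card_fin]

theorem card_neighborSet_eq_one_iff (B : GammaVert n) :
    Nat.card ((GammaGraph n).neighborSet B) = 1 ↔ #B.1 = n - 1 := by
  have hpow : 2 ^ (n - #B.1) - 1 = 1 ↔ n - #B.1 = 1 := by
    rw [← Nat.pow_eq_self_iff (a := 2) (b := n - #B.1) one_lt_two]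
    have := Nat.one_le_two_pow (n := n - #B.1)
    omega
  rw [card_neighborSet, hpow]
  have := B.card_lt
  omega

end GammaGraph

/-- For n ≥ 3, the end vertices (vertices of degree 1) of Γₙ are exactly the
subsets of cardinality n − 1, and there are exactly n of them. -/
theorem gammaGraph_end_vertices (n : ℕ) (hn : 3 ≤ n) :
    (∀ B : GammaVert n,
      Nat.card ((GammaGraph n).neighborSet B) = 1 ↔ B.1.card = n - 1) ∧
    Nat.card {B : GammaVert n // Nat.card ((GammaGraph n).neighborSet B) = 1} = n := by
  refine ⟨GammaGraph.card_neighborSet_eq_one_iff, ?_⟩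
  rw [Nat.card_congr (Equiv.subtypeEquivRight GammaGraph.card_neighborSet_eq_one_iff),
    GammaVert.card_cardEq (by omega) (by omega)]
  obtain ⟨m, rfl⟩ : ∃ m, n = m + 1 := ⟨n - 1, by omega⟩
  exact Nat.choose_succ_self_right m
end

section
/- For each k ∈ {0,1,2,3} there exists a commutative zero-divisor semigroup S whose zero-divisor graph Γ(S) is isomorphic to M_{3,k}. -/
/-- The graph M_{n,k} (for k ≤ n): the complete graph Kₙ on the vertices `inl i`
together with k end vertices `inr j`, where `inr j` is attached to `inl j`. -/
def Mgraph (n k : ℕ) : SimpleGraph (Fin n ⊕ Fin k) :=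
  SimpleGraph.fromRel (fun u v =>
    match u, v with
    | Sum.inl i, Sum.inl j => i ≠ j
    | Sum.inl i, Sum.inr j => (i : ℕ) = (j : ℕ)
    | _, _ => False)

/-!
The semigroup is a family of subsets of `{0, 1, 2}` under intersection, with `∅` as zero:
all sets of size at most one, together with the complements `{i}ᶜ` for `i < k`. The three
singletons are pairwise disjoint and form the triangle; `{i}ᶜ` is disjoint only from `{i}`,
which makes it an end vertex at `{i}`; and two complements of singletons of a three-element set
always meet. Every member has at most two elements, so it misses some point `i` and is
annihilated by `{i}`.
-/

theorem IsZeroDivisorSemigroup.nonempty_zdGraph_iso {S V : Type*} [CommSemigroupWithZero S]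
    (hS : IsZeroDivisorSemigroup S) (G : SimpleGraph V) (f : V → S)
    (hf : Function.Injective f) (hrange : Set.range f = {s | s ≠ 0})
    (hadj : ∀ u v, G.Adj u v ↔ u ≠ v ∧ f u * f v = 0) :
    Nonempty (zdGraph S ≃g G) := by
  have hf0 (v : V) : f v ≠ 0 := (hrange.subset ⟨v, rfl⟩ :)
  let e : V → {s : S // s ≠ 0 ∧ ∃ t : S, t ≠ 0 ∧ s * t = 0} := fun v => ⟨f v, hf0 v, hS (f v)⟩
  have he : Function.Bijective e := by
    refine ⟨fun u v h => hf (congrArg Subtype.val h), fun ⟨s, hs, _⟩ => ?_⟩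
    obtain ⟨v, rfl⟩ : s ∈ Set.range f := hrange ▸ hs
    exact ⟨v, rfl⟩
  refine ⟨(RelIso.mk (Equiv.ofBijective e he) fun {u v} => ?_).symm⟩
  change (e u ≠ e v ∧ f u * f v = 0) ↔ G.Adj u v
  rw [hadj, he.injective.ne_iff]

namespace InfClosed

variable {α : Type*} [SemilatticeInf α] [OrderBot α] {s : Set α}

abbrev commSemigroupWithZero (hs : InfClosed s) (hbot : ⊥ ∈ s) : CommSemigroupWithZero s where
  mul a b := ⟨a ⊓ b, hs a.2 b.2⟩
  mul_assoc _ _ _ := Subtype.ext (inf_assoc _ _ _)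
  mul_comm _ _ := Subtype.ext (inf_comm _ _)
  zero := ⟨⊥, hbot⟩
  zero_mul _ := Subtype.ext (bot_inf_eq _)
  mul_zero _ := Subtype.ext (inf_bot_eq _)

end InfClosed

namespace M3kSemigroup

def carrier (k : ℕ) : Set (Finset (Fin 3)) :=
  {A | A.card ≤ 1 ∨ ∃ i : Fin 3, (i : ℕ) < k ∧ A = {i}ᶜ}

lemma card_compl_singleton (i : Fin 3) : ({i}ᶜ : Finset (Fin 3)).card = 2 := by
  rw [Finset.card_compl, Finset.card_singleton, Fintype.card_fin]

lemma card_le_two_of_mem_carrier {k : ℕ} {A : Finset (Fin 3)} (hA : A ∈ carrier k) : A.card ≤ 2 := by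
  rcases hA with hA | ⟨i, -, rfl⟩
  · omega
  · rw [card_compl_singleton]

lemma compl_singleton_inter_compl_singleton_nonempty (i j : Fin 3) :
    ({i}ᶜ ∩ {j}ᶜ : Finset (Fin 3)).Nonempty := by
  revert i j; decide

lemma card_compl_singleton_inter_compl_singleton_le_one {i j : Fin 3} (hij : i ≠ j) :
    ({i}ᶜ ∩ {j}ᶜ : Finset (Fin 3)).card ≤ 1 := by
  revert i j; decide

lemma infClosed_carrier (k : ℕ) : InfClosed (carrier k) := by
  intro A hA B hB
  simp only [Finset.inf_eq_inter]
  rcases hA with hA | ⟨i, hi, rfl⟩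
  · exact Or.inl ((Finset.card_le_card Finset.inter_subset_left).trans hA)
  rcases hB with hB | ⟨j, hj, rfl⟩
  · exact Or.inl ((Finset.card_le_card Finset.inter_subset_right).trans hB)
  by_cases hij : i = j
  · subst hij
    exact Or.inr ⟨i, hi, Finset.inter_self _⟩
  · exact Or.inl (card_compl_singleton_inter_compl_singleton_le_one hij)

lemma empty_mem_carrier (k : ℕ) : (∅ : Finset (Fin 3)) ∈ carrier k := Or.inl (by simp)

instance (k : ℕ) : CommSemigroupWithZero (carrier k) :=
  (infClosed_carrier k).commSemigroupWithZero (empty_mem_carrier k)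

lemma coe_mul {k : ℕ} (A B : carrier k) :
    ((A * B : carrier k) : Finset (Fin 3)) = (A : Finset (Fin 3)) ∩ B := rfl

lemma coe_zero {k : ℕ} : ((0 : carrier k) : Finset (Fin 3)) = ∅ := rfl

lemma mul_eq_zero_iff {k : ℕ} (A B : carrier k) : A * B = 0 ↔ Disjoint (A : Finset (Fin 3)) B := by
  rw [Finset.disjoint_iff_inter_eq_empty, ← coe_mul, ← coe_zero, Subtype.ext_iff]

lemma ne_zero_iff {k : ℕ} (A : carrier k) : A ≠ 0 ↔ (A : Finset (Fin 3)).Nonempty := by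
  rw [Finset.nonempty_iff_ne_empty, Ne, Ne, Subtype.ext_iff, coe_zero]

lemma singleton_mem_carrier (k : ℕ) (i : Fin 3) : {i} ∈ carrier k := Or.inl (by simp)

lemma isZeroDivisorSemigroup (k : ℕ) : IsZeroDivisorSemigroup (carrier k) := by
  intro A
  obtain ⟨i, hi⟩ : ∃ i, i ∉ (A : Finset (Fin 3)) := by
    by_contra! h
    have := card_le_two_of_mem_carrier A.2
    rw [Finset.eq_univ_of_forall h, Finset.card_univ, Fintype.card_fin] at this
    omega
  refine ⟨⟨{i}, singleton_mem_carrier k i⟩, ?_, ?_⟩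
  · rw [ne_zero_iff]; exact Finset.singleton_nonempty i
  · rw [mul_eq_zero_iff]; exact Finset.disjoint_singleton_right.mpr hi

def vertex {k : ℕ} (hk : k ≤ 3) : Fin 3 ⊕ Fin k → carrier k
  | .inl i => ⟨{i}, singleton_mem_carrier k i⟩
  | .inr j => ⟨{Fin.castLE hk j}ᶜ, Or.inr ⟨Fin.castLE hk j, j.2, rfl⟩⟩

@[simp] lemma coe_vertex_inl {k : ℕ} (hk : k ≤ 3) (i : Fin 3) :
    (vertex hk (.inl i) : Finset (Fin 3)) = {i} := rfl

@[simp] lemma coe_vertex_inr {k : ℕ} (hk : k ≤ 3) (j : Fin k) :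
    (vertex hk (.inr j) : Finset (Fin 3)) = {Fin.castLE hk j}ᶜ := rfl

lemma vertex_injective {k : ℕ} (hk : k ≤ 3) : Function.Injective (vertex hk) := by
  have singleton_ne_compl (i j : Fin 3) : ({i} : Finset (Fin 3)) ≠ {j}ᶜ := fun h => by
    simpa [card_compl_singleton] using congrArg Finset.card h
  rintro (i | j) (i' | j') h <;>
    simp only [Subtype.ext_iff, coe_vertex_inl, coe_vertex_inr] at h
  · rw [Finset.singleton_inj.mp h]
  · exact absurd h (singleton_ne_compl _ _)
  · exact absurd h.symm (singleton_ne_compl _ _)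
  · rw [compl_inj_iff, Finset.singleton_inj] at h
    rw [Fin.castLE_injective hk h]

lemma range_vertex {k : ℕ} (hk : k ≤ 3) : Set.range (vertex hk) = {A | A ≠ 0} := by
  ext A
  rw [Set.mem_range, Set.mem_ofPred, ne_zero_iff]
  constructor
  · rintro ⟨i | j, rfl⟩
    · exact Finset.singleton_nonempty i
    · exact Finset.card_pos.mp (by rw [coe_vertex_inr, card_compl_singleton]; omega)
  · obtain ⟨A, hA⟩ := A
    intro hne
    rcases hA with hA | ⟨i, hi, rfl⟩
    · obtain ⟨i, rfl⟩ := Finset.card_eq_one.mp (le_antisymm hA (Finset.card_pos.mpr hne))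
      exact ⟨.inl i, rfl⟩
    · exact ⟨.inr ⟨i, hi⟩, rfl⟩

lemma mgraph_adj_iff_mul_eq_zero {k : ℕ} (hk : k ≤ 3) (u v : Fin 3 ⊕ Fin k) :
    (Mgraph 3 k).Adj u v ↔ u ≠ v ∧ vertex hk u * vertex hk v = 0 := by
  rw [mul_eq_zero_iff, Mgraph, SimpleGraph.fromRel_adj]
  rcases u with i | j <;> rcases v with i' | j'
  · simp [ne_comm]
  · simp [Fin.ext_iff]
  · simp [Fin.ext_iff, eq_comm]
  · simpa using fun _ => Finset.not_disjoint_iff_nonempty_inter.mpr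
      (compl_singleton_inter_compl_singleton_nonempty _ _)

end M3kSemigroup

open M3kSemigroup in
/-- **Theorem 2.3(1).** For each k ∈ {0,1,2,3} there is a commutative zero-divisor
semigroup whose zero-divisor graph is isomorphic to M_{3,k}. -/
theorem exists_semigroup_for_M3k (k : ℕ) (hk : k ≤ 3) :
    ∃ (S : Type) (inst : CommSemigroupWithZero S),
      @IsZeroDivisorSemigroup S inst ∧
      Nonempty (@zdGraph S inst ≃g Mgraph 3 k) :=
  ⟨carrier k, inferInstance, isZeroDivisorSemigroup k,
    (isZeroDivisorSemigroup k).nonempty_zdGraph_iso _ (vertex hk) (vertex_injective hk)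
      (range_vertex hk) (mgraph_adj_iff_mul_eq_zero hk)⟩
end

section
/- Let n ≥ 4 and let G be a simple graph whose vertex set is the disjoint union of {a_1, …, a_n} and sets X_1, …, X_n, satisfying: (1) X_1, X_2, X_3, X_4 are nonempty; (2) each a_k (1 ≤ k ≤ n) is adjacent to a_3 or to a_4; (3) a_i is adjacent to a_j whenever i ≠ j and both X_i and X_j are nonempty; (4) for each j, a_j is adjacent to every vertex of X_j; (5) there is no edge between a vertex of X_i and a vertex of X_j for i ≠ j; (6) there is no edge between a_i and any vertex of X_j for i ≠ j; (7) the edges inside each X_i are arbitrary. Then there is no commutative zero-divisor semigroup S whose zero-divisor graph Γ(S) is isomorphic to G. -/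
structure IsHubDecomposition {ι V : Type*} (G : SimpleGraph V) (a : ι → V) (X : ι → Set V) :
    Prop where
  hub_injective : Function.Injective a
  hub_not_mem : ∀ i j, a i ∉ X j
  disjoint : ∀ i j, i ≠ j → Disjoint (X i) (X j)
  cover : ∀ v : V, (∃ i, v = a i) ∨ ∃ i, v ∈ X i
  adj_hub : ∀ j, ∀ v ∈ X j, G.Adj (a j) v
  not_adj_of_ne : ∀ i j, i ≠ j → ∀ u ∈ X i, ∀ v ∈ X j, ¬ G.Adj u v
  hub_not_adj_of_ne : ∀ i j, i ≠ j → ∀ v ∈ X j, ¬ G.Adj (a i) v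

namespace IsHubDecomposition

variable {ι V : Type*} {G : SimpleGraph V} {a : ι → V} {X : ι → Set V}

theorem mem_insert_of_eq_or_adj (hG : IsHubDecomposition G a X) {v y : V} {j : ι}
    (hy : y ∈ X j) (h : v = y ∨ G.Adj v y) : v ∈ insert (a j) (X j) := by
  rcases h with rfl | hadj
  · exact Or.inr hy
  rcases hG.cover v with ⟨i, rfl⟩ | ⟨i, hv⟩ <;> by_cases hij : i = j
  · exact Or.inl (hij ▸ rfl)
  · exact absurd hadj (hG.hub_not_adj_of_ne i j hij y hy)
  · exact Or.inr (hij ▸ hv)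
  · exact absurd hadj (hG.not_adj_of_ne i j hij v hv y hy)

theorem eq_of_mem_insert_of_mem_insert (hG : IsHubDecomposition G a X) {v : V} {i j : ι}
    (hi : v ∈ insert (a i) (X i)) (hj : v ∈ insert (a j) (X j)) : i = j := by
  by_contra hij
  rcases hi with rfl | hi <;> rcases hj with hj | hj
  · exact hij (hG.hub_injective hj)
  · exact hG.hub_not_mem i j hj
  · exact hG.hub_not_mem j i (hj ▸ hi)
  · exact Set.disjoint_left.mp (hG.disjoint i j hij) hi hj

theorem eq_of_eq_or_adj (hG : IsHubDecomposition G a X) {v w : V} {i j : ι}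
    (hv : v ∈ insert (a i) (X i)) (hw : w ∈ X j) (h : v = w ∨ G.Adj v w) : i = j :=
  hG.eq_of_mem_insert_of_mem_insert hv (hG.mem_insert_of_eq_or_adj hw h)

theorem exists_eq_hub_of_eq_or_adj (hG : IsHubDecomposition G a X) {u : V} {i j : ι}
    (hij : i ≠ j) (hi : a i = u ∨ G.Adj (a i) u) (hj : a j = u ∨ G.Adj (a j) u) :
    ∃ k, u = a k := by
  refine (hG.cover u).resolve_right ?_
  rintro ⟨l, hu⟩
  have hil := hG.eq_of_eq_or_adj (Set.mem_insert _ _) hu hi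
  have hjl := hG.eq_of_eq_or_adj (Set.mem_insert _ _) hu hj
  exact hij (hil.trans hjl.symm)

end IsHubDecomposition

namespace zdGraph

variable {S V : Type*} [CommSemigroupWithZero S] {G : SimpleGraph V} (φ : zdGraph S ≃g G)

theorem mul_eq_zero_of_adj {v w : V} (h : G.Adj v w) : (φ.symm v : S) * φ.symm w = 0 :=
  (φ.symm.map_adj_iff.mpr h).2

theorem eq_or_adj_of_mul_eq_zero {v w : V} (h : (φ.symm v : S) * φ.symm w = 0) :
    v = w ∨ G.Adj v w := by
  refine or_iff_not_imp_left.mpr fun hvw => φ.symm.map_adj_iff.mp ⟨?_, h⟩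
  exact fun heq => hvw (φ.symm.injective heq)

theorem exists_symm_eq (hS : IsZeroDivisorSemigroup S) {s : S} (hs : s ≠ 0) :
    ∃ v, (φ.symm v : S) = s :=
  ⟨φ ⟨s, hs, hS s⟩, by rw [φ.symm_apply_apply]⟩

end zdGraph

namespace IsHubDecomposition

variable {ι S V : Type*} [CommSemigroupWithZero S] {G : SimpleGraph V} {a : ι → V}
  {X : ι → Set V}

open zdGraph

theorem exists_hub_eq_mul (hG : IsHubDecomposition G a X)
    (φ : zdGraph S ≃g G) (hS : IsZeroDivisorSemigroup S) {i j : ι} (hij : i ≠ j) {x y : V}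
    (hx : x ∈ X i) (hy : y ∈ X j) : ∃ k, (φ.symm (a k) : S) = φ.symm x * φ.symm y := by
  have hxy : (φ.symm x : S) * φ.symm y ≠ 0 := fun h =>
    hij (hG.eq_of_eq_or_adj (Or.inr hx) hy (eq_or_adj_of_mul_eq_zero φ h))
  obtain ⟨u, hu⟩ := exists_symm_eq φ hS hxy
  have hiu : a i = u ∨ G.Adj (a i) u := by
    refine eq_or_adj_of_mul_eq_zero φ ?_
    rw [hu, ← mul_assoc, mul_eq_zero_of_adj φ (hG.adj_hub i x hx), zero_mul]
  have hju : a j = u ∨ G.Adj (a j) u := by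
    refine eq_or_adj_of_mul_eq_zero φ ?_
    rw [hu, mul_left_comm, mul_eq_zero_of_adj φ (hG.adj_hub j y hy), mul_zero]
  obtain ⟨k, rfl⟩ := hG.exists_eq_hub_of_eq_or_adj hij hiu hju
  exact ⟨k, hu⟩

theorem mul_mul_hub_ne_zero (hG : IsHubDecomposition G a X)
    (φ : zdGraph S ≃g G) (hS : IsZeroDivisorSemigroup S) {i j l : ι} (hli : l ≠ i) (hlj : l ≠ j)
    {x y : V} (hx : x ∈ X i) (hy : y ∈ X j) (hXl : (X l).Nonempty) :
    (φ.symm x : S) * φ.symm y * φ.symm (a l) ≠ 0 := by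
  obtain ⟨q, hq⟩ := hXl
  intro hxyl
  have hlx : (φ.symm (a l) : S) * φ.symm x ≠ 0 := fun h =>
    hli (hG.eq_of_eq_or_adj (Set.mem_insert _ _) hx (eq_or_adj_of_mul_eq_zero φ h))
  obtain ⟨w, hw⟩ := exists_symm_eq φ hS hlx
  have hwy : w ∈ insert (a j) (X j) := by
    refine hG.mem_insert_of_eq_or_adj hy (eq_or_adj_of_mul_eq_zero φ ?_)
    rw [hw, mul_rotate, hxyl]
  refine hlj (hG.eq_of_eq_or_adj hwy hq (eq_or_adj_of_mul_eq_zero φ ?_)).symm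
  rw [hw, mul_right_comm, mul_eq_zero_of_adj φ (hG.adj_hub l q hq), zero_mul]

end IsHubDecomposition

/-- **Theorem 3.1.** For n ≥ 4, let G be a graph on the disjoint union of
{a₁,…,aₙ} and sets X₁,…,Xₙ such that: X₁,…,X₄ are nonempty; every aₖ is adjacent
to a₃ or a₄; aᵢ is adjacent to aⱼ whenever i ≠ j and Xᵢ, Xⱼ are nonempty; aⱼ is
adjacent to every vertex of Xⱼ; there are no edges between distinct Xᵢ and Xⱼ,
and none between aᵢ and Xⱼ for i ≠ j (edges inside each Xᵢ being arbitrary).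
Then no commutative zero-divisor semigroup has zero-divisor graph isomorphic
to G. -/
theorem no_semigroup_for_Ln (n : ℕ) (hn : 4 ≤ n)
    (V : Type*) (G : SimpleGraph V) (a : Fin n → V) (X : Fin n → Set V)
    (hainj : Function.Injective a)
    (haX : ∀ i j : Fin n, a i ∉ X j)
    (hXdisj : ∀ i j : Fin n, i ≠ j → Disjoint (X i) (X j))
    (hcover : ∀ v : V, (∃ i, v = a i) ∨ ∃ i, v ∈ X i)
    (h1 : ∀ i : Fin n, (i : ℕ) < 4 → (X i).Nonempty)
    (h2 : ∀ k : Fin n, G.Adj (a k) (a ⟨2, by omega⟩) ∨ G.Adj (a k) (a ⟨3, by omega⟩))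
    (h4 : ∀ j : Fin n, ∀ v ∈ X j, G.Adj (a j) v)
    (h5 : ∀ i j : Fin n, i ≠ j → ∀ u ∈ X i, ∀ v ∈ X j, ¬ G.Adj u v)
    (h6 : ∀ i j : Fin n, i ≠ j → ∀ v ∈ X j, ¬ G.Adj (a i) v)
    (S : Type*) [CommSemigroupWithZero S] (hS : IsZeroDivisorSemigroup S) :
    ¬ Nonempty (zdGraph S ≃g G) := by
  rintro ⟨φ⟩
  have hG : IsHubDecomposition G a X := ⟨hainj, haX, hXdisj, hcover, h4, h5, h6⟩
  obtain ⟨x, hx⟩ := h1 ⟨0, by omega⟩ (by simp)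
  obtain ⟨y, hy⟩ := h1 ⟨1, by omega⟩ (by simp)
  obtain ⟨k, hk⟩ := hG.exists_hub_eq_mul φ hS (by simp) hx hy
  have not_adj : ∀ l : Fin n, 2 ≤ (l : ℕ) → (l : ℕ) < 4 → ¬ G.Adj (a k) (a l) := by
    intro l hl2 hl4 hadj
    refine hG.mul_mul_hub_ne_zero φ hS (Fin.ne_of_val_ne ?_) (Fin.ne_of_val_ne ?_) hx hy
      (h1 l hl4) ?_
    · dsimp only; omega
    · dsimp only; omega
    · rw [← hk, zdGraph.mul_eq_zero_of_adj φ hadj]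
  exact (h2 k).elim (not_adj _ le_rfl (by simp)) (not_adj _ (by simp) (by simp))
end

section
/- Let m, n ≥ 2 and let G be a simple graph whose vertex set is the disjoint union of A = {a_1, …, a_m}, B = {b_1, …, b_n}, and nonempty sets X_1 and Y_1, satisfying: (1) a_1 and a_2 are adjacent to every b_k (1 ≤ k ≤ n), and b_1 and b_2 are adjacent to every a_r (1 ≤ r ≤ m); (2) a_1 is adjacent to every vertex of X_1 and b_1 is adjacent to every vertex of Y_1; (3) there is no edge between a vertex of X_1 and a vertex of Y_1; (4) there is no edge between any a_i and any vertex of Y_1, and no edge between any b_j and any vertex of X_1; (5) there is no edge between a_i and any vertex of X_1 for i ≠ 1, and no edge between b_j and any vertex of Y_1 for j ≠ 1; (6) there are no edges within A and no edges within B (the induced subgraph on A ∪ B is a subgraph of the complete bipartite graph K_{m,n}); (7) the edges inside X_1 and inside Y_1 are arbitrary. Then there is no commutative zero-divisor semigroup S whose zero-divisor graph Γ(S) is isomorphic to G. -/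
section

variable {V S : Type*} [CommSemigroupWithZero S]

structure IsZeroDivisorLabeling (G : SimpleGraph V) (f : V → S) : Prop where
  adj_iff : ∀ {u v}, G.Adj u v ↔ u ≠ v ∧ f u * f v = 0
  exists_eq : ∀ {s}, s ≠ 0 → ∃ v, f v = s

theorem isZeroDivisorLabeling_of_iso {G : SimpleGraph V} (hS : IsZeroDivisorSemigroup S)
    (e : zdGraph S ≃g G) : IsZeroDivisorLabeling G fun v => (e.symm v : S) where
  adj_iff {u v} := by
    rw [← e.symm.map_adj_iff]
    exact and_congr_left' e.symm.injective.ne_iff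
  exists_eq {s} hs := ⟨e ⟨s, hs, hS s⟩, by simp⟩

namespace IsZeroDivisorLabeling

variable {G : SimpleGraph V} {f : V → S} {u v : V}

theorem mul_eq_zero (hf : IsZeroDivisorLabeling G f) (h : G.Adj u v) : f u * f v = 0 :=
  (hf.adj_iff.1 h).2

theorem mul_ne_zero (hf : IsZeroDivisorLabeling G f) (huv : u ≠ v) (h : ¬G.Adj u v) :
    f u * f v ≠ 0 :=
  fun h0 => h (hf.adj_iff.2 ⟨huv, h0⟩)

theorem eq_or_adj_of_mul_eq_zero (hf : IsZeroDivisorLabeling G f) (h : f u * f v = 0) :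
    v = u ∨ G.Adj u v := by
  by_cases huv : u = v
  · exact Or.inl huv.symm
  · exact Or.inr (hf.adj_iff.2 ⟨huv, h⟩)

end IsZeroDivisorLabeling

/-- The graphs `H_{m,n}` of the paper, with `A = range a` and `B = range b`; the vertices
`a i₀, a i₁, b j₀, b j₁` are the paper's `a₁, a₂, b₁, b₂`. -/
structure IsHmnGraph {ι κ : Type*} (G : SimpleGraph V) (a : ι → V) (b : κ → V) (X Y : Set V)
    (i₀ i₁ : ι) (j₀ j₁ : κ) : Prop where
  cover : ∀ v, (∃ i, v = a i) ∨ (∃ j, v = b j) ∨ v ∈ X ∨ v ∈ Y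
  ne_i₀ : i₁ ≠ i₀
  ne_j₀ : j₁ ≠ j₀
  nonempty_X : X.Nonempty
  nonempty_Y : Y.Nonempty
  adj_a_b : ∀ j, G.Adj (a i₀) (b j) ∧ G.Adj (a i₁) (b j)
  adj_b_a : ∀ i, G.Adj (b j₀) (a i) ∧ G.Adj (b j₁) (a i)
  adj_X : ∀ v ∈ X, G.Adj (a i₀) v
  adj_Y : ∀ v ∈ Y, G.Adj (b j₀) v
  not_adj_X_Y : ∀ u ∈ X, ∀ v ∈ Y, ¬G.Adj u v
  not_adj_a_Y : ∀ i, ∀ v ∈ Y, ¬G.Adj (a i) v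
  not_adj_b_X : ∀ j, ∀ v ∈ X, ¬G.Adj (b j) v
  not_adj_a_X : ∀ i ≠ i₀, ∀ v ∈ X, ¬G.Adj (a i) v
  not_adj_b_Y : ∀ j ≠ j₀, ∀ v ∈ Y, ¬G.Adj (b j) v
  not_adj_a_a : ∀ i i', ¬G.Adj (a i) (a i')
  not_adj_b_b : ∀ j j', ¬G.Adj (b j) (b j')

namespace IsHmnGraph

variable {ι κ : Type*} {G : SimpleGraph V} {a : ι → V} {b : κ → V} {X Y : Set V}
  {i₀ i₁ : ι} {j₀ j₁ : κ} {f : V → S} {w x y : V}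

theorem symm (h : IsHmnGraph G a b X Y i₀ i₁ j₀ j₁) : IsHmnGraph G b a Y X j₀ j₁ i₀ i₁ where
  cover v := by have := h.cover v; tauto
  ne_i₀ := h.ne_j₀
  ne_j₀ := h.ne_i₀
  nonempty_X := h.nonempty_Y
  nonempty_Y := h.nonempty_X
  adj_a_b := h.adj_b_a
  adj_b_a := h.adj_a_b
  adj_X := h.adj_Y
  adj_Y := h.adj_X
  not_adj_X_Y u hu v hv huv := h.not_adj_X_Y v hv u hu huv.symm
  not_adj_a_Y := h.not_adj_b_X
  not_adj_b_X := h.not_adj_a_Y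
  not_adj_a_X := h.not_adj_b_Y
  not_adj_b_Y := h.not_adj_a_X
  not_adj_a_a := h.not_adj_b_b
  not_adj_b_b := h.not_adj_a_a

theorem a_not_mem_X (h : IsHmnGraph G a b X Y i₀ i₁ j₀ j₁) (i : ι) : a i ∉ X :=
  fun hX => h.not_adj_a_a i₀ i (h.adj_X _ hX)

theorem a_not_mem_Y (h : IsHmnGraph G a b X Y i₀ i₁ j₀ j₁) (i : ι) : a i ∉ Y :=
  fun hY => h.not_adj_b_Y j₁ h.ne_j₀ _ hY (h.adj_b_a i).2

theorem a_ne_b (h : IsHmnGraph G a b X Y i₀ i₁ j₀ j₁) (i : ι) (j : κ) : a i ≠ b j :=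
  fun hab => h.not_adj_b_b j₀ j (hab ▸ (h.adj_b_a i).1)

theorem ne_of_mem_X_of_mem_Y (h : IsHmnGraph G a b X Y i₀ i₁ j₀ j₁) (hx : x ∈ X) (hy : y ∈ Y) :
    x ≠ y :=
  fun hxy => h.not_adj_a_Y i₀ y hy (hxy ▸ h.adj_X x hx)

theorem a₁_ne_a₀ (h : IsHmnGraph G a b X Y i₀ i₁ j₀ j₁) : a i₁ ≠ a i₀ := by
  obtain ⟨x, hx⟩ := h.nonempty_X
  exact fun he => h.not_adj_a_X i₁ h.ne_i₀ x hx (he ▸ h.adj_X x hx)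

theorem mem_of_mul_a₀_eq_zero (h : IsHmnGraph G a b X Y i₀ i₁ j₀ j₁)
    (hf : IsZeroDivisorLabeling G f) (hw : f (a i₀) * f w = 0) :
    w = a i₀ ∨ (∃ j, w = b j) ∨ w ∈ X := by
  rcases hf.eq_or_adj_of_mul_eq_zero hw with rfl | hadj
  · exact Or.inl rfl
  rcases h.cover w with ⟨i, rfl⟩ | hb | hX | hY
  · exact (h.not_adj_a_a _ _ hadj).elim
  · exact Or.inr (Or.inl hb)
  · exact Or.inr (Or.inr hX)
  · exact (h.not_adj_a_Y _ _ hY hadj).elim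

theorem not_mem_Y_of_mul_a₀_eq_zero (h : IsHmnGraph G a b X Y i₀ i₁ j₀ j₁)
    (hf : IsZeroDivisorLabeling G f) (hw : f (a i₀) * f w = 0) : w ∉ Y := by
  rcases h.mem_of_mul_a₀_eq_zero hf hw with rfl | ⟨j, rfl⟩ | hX
  · exact h.a_not_mem_Y i₀
  · exact h.symm.a_not_mem_X j
  · exact fun hY => h.ne_of_mem_X_of_mem_Y hX hY rfl

theorem mem_of_mul_eq_zero_of_mem_X (h : IsHmnGraph G a b X Y i₀ i₁ j₀ j₁)
    (hf : IsZeroDivisorLabeling G f) (hx : x ∈ X) (hw : f x * f w = 0) : w = a i₀ ∨ w ∈ X := by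
  rcases hf.eq_or_adj_of_mul_eq_zero hw with rfl | hadj
  · exact Or.inr hx
  rcases h.cover w with ⟨i, rfl⟩ | ⟨j, rfl⟩ | hX | hY
  · by_cases hi : i = i₀
    · exact Or.inl (congrArg a hi)
    · exact (h.not_adj_a_X i hi x hx hadj.symm).elim
  · exact (h.not_adj_b_X j x hx hadj.symm).elim
  · exact Or.inr hX
  · exact (h.not_adj_X_Y x hx w hY hadj).elim

theorem eq_a₀_of_mul_eq_zero (h : IsHmnGraph G a b X Y i₀ i₁ j₀ j₁)
    (hf : IsZeroDivisorLabeling G f) (hx : x ∈ X) (hxw : f x * f w = 0)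
    (hbw : f (b j₀) * f w = 0) : w = a i₀ :=
  (h.mem_of_mul_eq_zero_of_mem_X hf hx hxw).resolve_right
    (h.symm.not_mem_Y_of_mul_a₀_eq_zero hf hbw)

theorem eq_a₀_or_eq_b₀ (h : IsHmnGraph G a b X Y i₀ i₁ j₀ j₁)
    (hf : IsZeroDivisorLabeling G f) (haw : f (a i₀) * f w = 0) (hbw : f (b j₀) * f w = 0) :
    w = a i₀ ∨ w = b j₀ := by
  rcases h.mem_of_mul_a₀_eq_zero hf haw with rfl | ⟨j, rfl⟩ | hX
  · exact Or.inl rfl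
  · rcases h.symm.mem_of_mul_a₀_eq_zero hf hbw with hj | ⟨i, hi⟩ | hY
    · exact Or.inr hj
    · exact absurd hi.symm (h.a_ne_b i j)
    · exact absurd hY (h.symm.a_not_mem_X j)
  · exact absurd hX (h.symm.not_mem_Y_of_mul_a₀_eq_zero hf hbw)

theorem mul_ne_a₀ (h : IsHmnGraph G a b X Y i₀ i₁ j₀ j₁) (hf : IsZeroDivisorLabeling G f)
    (hx : x ∈ X) (hy : y ∈ Y) : f x * f y ≠ f (a i₀) := by
  intro hxy
  obtain ⟨w, hw⟩ := hf.exists_eq <|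
    hf.mul_ne_zero (fun he : b j₁ = y => h.symm.a_not_mem_X j₁ (he ▸ hy)) (h.not_adj_b_Y j₁ h.ne_j₀ y hy)
  have hwa : w = a i₀ := h.eq_a₀_of_mul_eq_zero hf hx
    (by rw [hw, mul_left_comm, hxy, mul_comm]; exact hf.mul_eq_zero (h.adj_a_b j₁).1)
    (by rw [hw, mul_left_comm, hf.mul_eq_zero (h.adj_Y y hy), mul_zero])
  subst hwa
  refine hf.mul_ne_zero h.a₁_ne_a₀ (h.not_adj_a_a i₁ i₀) ?_
  rw [hw, ← mul_assoc, hf.mul_eq_zero (h.adj_a_b j₁).2, zero_mul]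

theorem not_isZeroDivisorLabeling (h : IsHmnGraph G a b X Y i₀ i₁ j₀ j₁) (f : V → S) :
    ¬IsZeroDivisorLabeling G f := by
  intro hf
  obtain ⟨x, hx⟩ := h.nonempty_X
  obtain ⟨y, hy⟩ := h.nonempty_Y
  obtain ⟨w, hw⟩ := hf.exists_eq <|
    hf.mul_ne_zero (h.ne_of_mem_X_of_mem_Y hx hy) (h.not_adj_X_Y x hx y hy)
  rcases h.eq_a₀_or_eq_b₀ hf
      (by rw [hw, ← mul_assoc, hf.mul_eq_zero (h.adj_X x hx), zero_mul])
      (by rw [hw, mul_left_comm, hf.mul_eq_zero (h.adj_Y y hy), mul_zero]) with rfl | rfl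
  · exact h.mul_ne_a₀ hf hx hy hw.symm
  · exact h.symm.mul_ne_a₀ hf hy hx (by rw [mul_comm, hw])

end IsHmnGraph

end

/-- **Theorem 3.3.** For m, n ≥ 2, let G be a graph on the disjoint union of
A = {a₁,…,a_m}, B = {b₁,…,b_n} and nonempty sets X₁, Y₁ such that: a₁,a₂ are
adjacent to every bₖ and b₁,b₂ to every aᵣ; a₁ (resp. b₁) is adjacent to every
vertex of X₁ (resp. Y₁); there are no edges between X₁ and Y₁, none between any
aᵢ and Y₁, none between any bⱼ and X₁, none between aᵢ (i ≠ 1) and X₁, none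
between bⱼ (j ≠ 1) and Y₁, and none inside A or inside B (edges inside X₁ and Y₁
being arbitrary). Then no commutative zero-divisor semigroup has zero-divisor
graph isomorphic to G. -/
theorem no_semigroup_for_Hmn (m n : ℕ) (hm : 2 ≤ m) (hn : 2 ≤ n)
    (V : Type*) (G : SimpleGraph V)
    (a : Fin m → V) (b : Fin n → V) (X Y : Set V)
    (hXne : X.Nonempty) (hYne : Y.Nonempty)
    (hcover : ∀ v : V, (∃ i, v = a i) ∨ (∃ j, v = b j) ∨ v ∈ X ∨ v ∈ Y)
    (h1a : ∀ k : Fin n, G.Adj (a ⟨0, by omega⟩) (b k) ∧ G.Adj (a ⟨1, by omega⟩) (b k))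
    (h1b : ∀ r : Fin m, G.Adj (b ⟨0, by omega⟩) (a r) ∧ G.Adj (b ⟨1, by omega⟩) (a r))
    (h2a : ∀ v ∈ X, G.Adj (a ⟨0, by omega⟩) v)
    (h2b : ∀ v ∈ Y, G.Adj (b ⟨0, by omega⟩) v)
    (h3 : ∀ u ∈ X, ∀ v ∈ Y, ¬ G.Adj u v)
    (h4a : ∀ i : Fin m, ∀ v ∈ Y, ¬ G.Adj (a i) v)
    (h4b : ∀ j : Fin n, ∀ v ∈ X, ¬ G.Adj (b j) v)
    (h5a : ∀ i : Fin m, (i : ℕ) ≠ 0 → ∀ v ∈ X, ¬ G.Adj (a i) v)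
    (h5b : ∀ j : Fin n, (j : ℕ) ≠ 0 → ∀ v ∈ Y, ¬ G.Adj (b j) v)
    (h6a : ∀ i j : Fin m, ¬ G.Adj (a i) (a j))
    (h6b : ∀ i j : Fin n, ¬ G.Adj (b i) (b j))
    (S : Type*) [CommSemigroupWithZero S] (hS : IsZeroDivisorSemigroup S) :
    ¬ Nonempty (zdGraph S ≃g G) := by
  rintro ⟨e⟩
  have hH : IsHmnGraph G a b X Y ⟨0, by omega⟩ ⟨1, by omega⟩ ⟨0, by omega⟩ ⟨1, by omega⟩ :=
    ⟨hcover, Fin.ne_of_val_ne one_ne_zero, Fin.ne_of_val_ne one_ne_zero, hXne, hYne, h1a, h1b,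
      h2a, h2b, h3, h4a, h4b, fun i hi => h5a i (Fin.val_ne_iff.2 hi),
      fun j hj => h5b j (Fin.val_ne_iff.2 hj), h6a, h6b⟩
  exact hH.not_isZeroDivisorLabeling _ (isZeroDivisorLabeling_of_iso hS e)
end

section
/- Let m, n ≥ 2 and let L be a simple graph obtained from the complete bipartite graph K_{m,n} by attaching k ≥ 2 end vertices to k distinct vertices of K_{m,n} (i.e., L consists of parts A = {a_1,…,a_m} and B = {b_1,…,b_n} with every a_i adjacent to every b_j and no other edges among A ∪ B, together with k ≥ 2 new vertices each adjacent to exactly one vertex of A ∪ B, no two of them adjacent to the same vertex). Then there is no commutative zero-divisor semigroup S whose zero-divisor graph Γ(S) is isomorphic to L. -/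
/-- `L` is `K_{m,n}` with parts `a`, `b`, together with end vertices `x l` attached to
distinct vertices `c l` of `K_{m,n}`. -/
structure IsLmnGraph {V : Type*} {m n k : ℕ} (L : SimpleGraph V) (a : Fin m → V) (b : Fin n → V)
    (x c : Fin k → V) : Prop where
  a_injective : Function.Injective a
  b_injective : Function.Injective b
  x_injective : Function.Injective x
  a_ne_b : ∀ i j, a i ≠ b j
  a_ne_x : ∀ i l, a i ≠ x l
  b_ne_x : ∀ j l, b j ≠ x l
  c_injective : Function.Injective c
  c_mem : ∀ l, (∃ i, c l = a i) ∨ (∃ j, c l = b j)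
  cover : ∀ v, (∃ i, v = a i) ∨ (∃ j, v = b j) ∨ (∃ l, v = x l)
  adj_iff : ∀ u v, L.Adj u v ↔
    ((∃ i j, (u = a i ∧ v = b j) ∨ (u = b j ∧ v = a i)) ∨
     (∃ l, (u = x l ∧ v = c l) ∨ (u = c l ∧ v = x l)))

structure IsZeroDivisorRealization {V S : Type*} [CommSemigroupWithZero S] (L : SimpleGraph V)
    (f : V → S) : Prop where
  ne_zero : ∀ v, f v ≠ 0
  mul_eq_zero_iff : ∀ {u v}, u ≠ v → (f u * f v = 0 ↔ L.Adj u v)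
  exists_eq : ∀ {s t : S}, s ≠ 0 → t ≠ 0 → s * t = 0 → ∃ v, f v = s

theorem isZeroDivisorRealization_of_iso {V S : Type*} [CommSemigroupWithZero S]
    {L : SimpleGraph V} (e : zdGraph S ≃g L) :
    IsZeroDivisorRealization L fun v => (e.symm v : S) where
  ne_zero v := (e.symm v).2.1
  mul_eq_zero_iff {u v} huv := by
    rw [← e.symm.map_rel_iff]
    exact ⟨fun h => ⟨e.symm.injective.ne huv, h⟩, And.right⟩
  exists_eq {s t} hs ht hst := ⟨e ⟨s, hs, t, ht, hst⟩, by simp⟩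

namespace IsLmnGraph

variable {V : Type*} {m n k : ℕ} {L : SimpleGraph V} {a : Fin m → V} {b : Fin n → V}
  {x c : Fin k → V}

theorem swap (hL : IsLmnGraph L a b x c) : IsLmnGraph L b a x c where
  a_injective := hL.b_injective
  b_injective := hL.a_injective
  x_injective := hL.x_injective
  a_ne_b j i := (hL.a_ne_b i j).symm
  a_ne_x := hL.b_ne_x
  b_ne_x := hL.a_ne_x
  c_injective := hL.c_injective
  c_mem l := (hL.c_mem l).symm
  cover v := or_left_comm.1 (hL.cover v)
  adj_iff u v := by
    rw [hL.adj_iff]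
    exact or_congr_left
      ⟨fun ⟨i, j, h⟩ => ⟨j, i, h.symm⟩, fun ⟨j, i, h⟩ => ⟨i, j, h.symm⟩⟩

theorem adj_a_b (hL : IsLmnGraph L a b x c) (i : Fin m) (j : Fin n) : L.Adj (a i) (b j) :=
  (hL.adj_iff _ _).2 (Or.inl ⟨i, j, Or.inl ⟨rfl, rfl⟩⟩)

theorem not_adj_a_a (hL : IsLmnGraph L a b x c) (i i' : Fin m) : ¬ L.Adj (a i) (a i') := by
  rw [hL.adj_iff]
  rintro (⟨_, j, ⟨-, h⟩ | ⟨h, -⟩⟩ | ⟨l, ⟨h, -⟩ | ⟨-, h⟩⟩)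
  · exact hL.a_ne_b _ _ h
  · exact hL.a_ne_b _ _ h
  · exact hL.a_ne_x _ _ h
  · exact hL.a_ne_x _ _ h

theorem adj_x_c (hL : IsLmnGraph L a b x c) (l : Fin k) : L.Adj (x l) (c l) :=
  (hL.adj_iff _ _).2 (Or.inr ⟨l, Or.inl ⟨rfl, rfl⟩⟩)

theorem c_ne_x (hL : IsLmnGraph L a b x c) (l l' : Fin k) : c l ≠ x l' := by
  rcases hL.c_mem l with ⟨i, h⟩ | ⟨j, h⟩ <;> rw [h]
  exacts [hL.a_ne_x i l', hL.b_ne_x j l']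

theorem eq_c_of_adj_x (hL : IsLmnGraph L a b x c) {l : Fin k} {v : V} (h : L.Adj (x l) v) :
    v = c l := by
  rcases (hL.adj_iff _ _).1 h with ⟨i, j, ⟨h', -⟩ | ⟨h', -⟩⟩ | ⟨l', ⟨h', hv⟩ | ⟨h', -⟩⟩
  · exact absurd h'.symm (hL.a_ne_x i l)
  · exact absurd h'.symm (hL.b_ne_x j l)
  · rwa [hL.x_injective h']
  · exact absurd h'.symm (hL.c_ne_x l' l)

section Realization

variable {S : Type*} [CommSemigroupWithZero S] {f : V → S}

theorem mul_a_b (hL : IsLmnGraph L a b x c) (hf : IsZeroDivisorRealization L f)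
    (i : Fin m) (j : Fin n) : f (a i) * f (b j) = 0 :=
  (hf.mul_eq_zero_iff (hL.a_ne_b i j)).2 (hL.adj_a_b i j)

theorem mul_a_a_ne_zero (hL : IsLmnGraph L a b x c) (hf : IsZeroDivisorRealization L f)
    {i i' : Fin m} (h : i ≠ i') : f (a i) * f (a i') ≠ 0 := fun h0 =>
  hL.not_adj_a_a i i' ((hf.mul_eq_zero_iff (hL.a_injective.ne h)).1 h0)

theorem mul_x_c (hL : IsLmnGraph L a b x c) (hf : IsZeroDivisorRealization L f) (l : Fin k) :
    f (x l) * f (c l) = 0 :=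
  (hf.mul_eq_zero_iff (hL.c_ne_x l l).symm).2 (hL.adj_x_c l)

theorem eq_c_of_mul_x (hL : IsLmnGraph L a b x c) (hf : IsZeroDivisorRealization L f)
    {l : Fin k} {v : V} (hv : v ≠ x l) (h : f (x l) * f v = 0) : v = c l :=
  hL.eq_c_of_adj_x ((hf.mul_eq_zero_iff hv.symm).1 h)

theorem exists_eq_a_of_forall_mul_b (hL : IsLmnGraph L a b x c)
    (hf : IsZeroDivisorRealization L f) [Nontrivial (Fin n)] {z : S} (hz : z ≠ 0)
    (h : ∀ j, z * f (b j) = 0) : ∃ i, z = f (a i) := by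
  obtain ⟨j₀, j₁, hj⟩ := exists_pair_ne (Fin n)
  obtain ⟨v, rfl⟩ := hf.exists_eq hz (hf.ne_zero (b j₀)) (h j₀)
  rcases hL.cover v with ⟨i, rfl⟩ | ⟨j, rfl⟩ | ⟨l, rfl⟩
  · exact ⟨i, rfl⟩
  · obtain ⟨j', hj'⟩ := exists_ne j
    exact absurd (h j') (hL.swap.mul_a_a_ne_zero hf hj'.symm)
  · have hc : ∀ j, b j = c l := fun j => hL.eq_c_of_mul_x hf (hL.b_ne_x j l) (h j)
    exact absurd (hL.b_injective ((hc j₀).trans (hc j₁).symm)) hj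

theorem mul_x_a_eq_c (hL : IsLmnGraph L a b x c) (hf : IsZeroDivisorRealization L f)
    [Nontrivial (Fin n)] {l : Fin k} {r t : Fin m} (hc : c l = a t) (hrt : r ≠ t) :
    f (x l) * f (a r) = f (a t) := by
  have hne : f (x l) * f (a r) ≠ 0 := fun h0 =>
    hrt (hL.a_injective ((hL.eq_c_of_mul_x hf (hL.a_ne_x r l) h0).trans hc))
  obtain ⟨u, hu⟩ := hL.exists_eq_a_of_forall_mul_b hf hne fun j => by
    rw [mul_assoc, hL.mul_a_b hf, mul_zero]
  obtain rfl : u = t := by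
    by_contra hut
    apply hL.mul_a_a_ne_zero hf hut
    rw [← hu, mul_right_comm, ← hc, hL.mul_x_c hf, zero_mul]
  exact hu

theorem c_ne_a_of_c_eq_a (hL : IsLmnGraph L a b x c) (hf : IsZeroDivisorRealization L f)
    [Nontrivial (Fin n)] {l₁ l₂ : Fin k} {r t : Fin m} (hl : l₁ ≠ l₂) (h₁ : c l₁ = a r) :
    c l₂ ≠ a t := by
  intro h₂
  have hrt : r ≠ t := by
    rintro rfl
    exact hl (hL.c_injective (h₁.trans h₂.symm))
  have hsq : f (a r) * f (a r) = 0 :=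
    calc f (a r) * f (a r) = f (x l₁) * f (a t) * f (a r) := by
          rw [hL.mul_x_a_eq_c hf h₁ hrt.symm]
      _ = f (x l₁) * f (c l₁) * f (a t) := by rw [h₁, mul_right_comm]
      _ = 0 := by rw [hL.mul_x_c hf, zero_mul]
  apply hL.mul_a_a_ne_zero hf hrt
  calc f (a r) * f (a t) = f (a r) * (f (x l₂) * f (a r)) := by
        rw [hL.mul_x_a_eq_c hf h₂ hrt]
    _ = f (x l₂) * (f (a r) * f (a r)) := mul_left_comm _ _ _
    _ = 0 := by rw [hsq, mul_zero]

theorem mul_x_x_ne_a (hL : IsLmnGraph L a b x c) (hf : IsZeroDivisorRealization L f)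
    [Nontrivial (Fin m)] [Nontrivial (Fin n)] {l₁ l₂ : Fin k} {s : Fin n} (hl : l₁ ≠ l₂)
    (h₂ : c l₂ = b s)
    (i : Fin m) : f (x l₁) * f (x l₂) ≠ f (a i) := by
  intro hi
  obtain ⟨j, hj⟩ := exists_ne s
  have hbs : f (x l₁) * f (b s) = 0 := by
    rw [← hL.swap.mul_x_a_eq_c hf h₂ hj, ← mul_assoc, hi, hL.mul_a_b hf]
  exact hl (hL.c_injective ((hL.eq_c_of_mul_x hf (hL.b_ne_x s l₁) hbs).symm.trans h₂.symm))

theorem c_ne_b_of_c_eq_a (hL : IsLmnGraph L a b x c) (hf : IsZeroDivisorRealization L f)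
    [Nontrivial (Fin m)] [Nontrivial (Fin n)] {l₁ l₂ : Fin k} {r : Fin m} {s : Fin n}
    (hl : l₁ ≠ l₂) (h₁ : c l₁ = a r) : c l₂ ≠ b s := by
  intro h₂
  have hp : f (x l₁) * f (x l₂) ≠ 0 := fun h0 =>
    hL.a_ne_x r l₂ ((hL.eq_c_of_mul_x hf (hL.x_injective.ne hl.symm) h0).trans h₁).symm
  have hpa : f (x l₁) * f (x l₂) * f (a r) = 0 := by
    rw [mul_right_comm, ← h₁, hL.mul_x_c hf, zero_mul]
  have hpb : f (x l₁) * f (x l₂) * f (b s) = 0 := by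
    rw [mul_assoc, ← h₂, hL.mul_x_c hf, mul_zero]
  obtain ⟨v, hv⟩ := hf.exists_eq hp (hf.ne_zero _) hpa
  rcases hL.cover v with ⟨i, rfl⟩ | ⟨j, rfl⟩ | ⟨l, rfl⟩
  · exact hL.mul_x_x_ne_a hf hl h₂ i hv.symm
  · exact hL.swap.mul_x_x_ne_a hf hl.symm h₁ j (by rw [mul_comm, hv])
  · rw [← hv] at hpa hpb
    exact hL.a_ne_b r s ((hL.eq_c_of_mul_x hf (hL.a_ne_x r l) hpa).trans
      (hL.eq_c_of_mul_x hf (hL.b_ne_x s l) hpb).symm)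

theorem not_isZeroDivisorRealization (hL : IsLmnGraph L a b x c) [Nontrivial (Fin m)]
    [Nontrivial (Fin n)] [Nontrivial (Fin k)] (f : V → S) : ¬ IsZeroDivisorRealization L f := by
  intro hf
  obtain ⟨l₁, l₂, hl⟩ := exists_pair_ne (Fin k)
  rcases hL.c_mem l₁ with ⟨r, h₁⟩ | ⟨r, h₁⟩ <;> rcases hL.c_mem l₂ with ⟨s, h₂⟩ | ⟨s, h₂⟩
  · exact hL.c_ne_a_of_c_eq_a hf hl h₁ h₂
  · exact hL.c_ne_b_of_c_eq_a hf hl h₁ h₂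
  · exact hL.c_ne_b_of_c_eq_a hf hl.symm h₂ h₁
  · exact hL.swap.c_ne_a_of_c_eq_a hf hl h₁ h₂

end Realization

end IsLmnGraph

theorem no_semigroup_for_Lmn_general (m n k : ℕ) (hm : 2 ≤ m) (hn : 2 ≤ n) (hk : 2 ≤ k)
    (V : Type*) (L : SimpleGraph V)
    (a : Fin m → V) (b : Fin n → V) (x : Fin k → V) (c : Fin k → V)
    (hainj : Function.Injective a) (hbinj : Function.Injective b)
    (hxinj : Function.Injective x)
    (hab : ∀ i j, a i ≠ b j) (hax : ∀ i j, a i ≠ x j) (hbx : ∀ i j, b i ≠ x j)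
    (hcinj : Function.Injective c)
    (hc : ∀ i, (∃ r, c i = a r) ∨ (∃ s, c i = b s))
    (hcover : ∀ v : V, (∃ i, v = a i) ∨ (∃ j, v = b j) ∨ (∃ i, v = x i))
    (hadj : ∀ u v : V, L.Adj u v ↔
      ((∃ i j, (u = a i ∧ v = b j) ∨ (u = b j ∧ v = a i)) ∨
       (∃ i, (u = x i ∧ v = c i) ∨ (u = c i ∧ v = x i))))
    (S : Type*) [CommSemigroupWithZero S] :
    ¬ Nonempty (zdGraph S ≃g L) := by
  have : Nontrivial (Fin m) := Fin.nontrivial_iff_two_le.2 hm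
  have : Nontrivial (Fin n) := Fin.nontrivial_iff_two_le.2 hn
  have : Nontrivial (Fin k) := Fin.nontrivial_iff_two_le.2 hk
  rintro ⟨e⟩
  exact IsLmnGraph.not_isZeroDivisorRealization
    ⟨hainj, hbinj, hxinj, hab, hax, hbx, hcinj, hc, hcover, hadj⟩ _
    (isZeroDivisorRealization_of_iso e)

/-- **Corollary 3.4.** For m, n ≥ 2, let L be the complete bipartite graph K_{m,n}
(parts A = {a₁,…,a_m}, B = {b₁,…,b_n}) together with k ≥ 2 end vertices x₁,…,x_k,
each attached to exactly one vertex c i of A ∪ B, no two attached to the same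
vertex. Then no commutative zero-divisor semigroup has zero-divisor graph
isomorphic to L. -/
theorem no_semigroup_for_Lmn (m n k : ℕ) (hm : 2 ≤ m) (hn : 2 ≤ n) (hk : 2 ≤ k)
    (V : Type*) (L : SimpleGraph V)
    (a : Fin m → V) (b : Fin n → V) (x : Fin k → V) (c : Fin k → V)
    (hainj : Function.Injective a) (hbinj : Function.Injective b)
    (hxinj : Function.Injective x)
    (hab : ∀ i j, a i ≠ b j) (hax : ∀ i j, a i ≠ x j) (hbx : ∀ i j, b i ≠ x j)
    (hcinj : Function.Injective c)
    (hc : ∀ i, (∃ r, c i = a r) ∨ (∃ s, c i = b s))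
    (hcover : ∀ v : V, (∃ i, v = a i) ∨ (∃ j, v = b j) ∨ (∃ i, v = x i))
    (hadj : ∀ u v : V, L.Adj u v ↔
      ((∃ i j, (u = a i ∧ v = b j) ∨ (u = b j ∧ v = a i)) ∨
       (∃ i, (u = x i ∧ v = c i) ∨ (u = c i ∧ v = x i))))
    (S : Type*) [CommSemigroupWithZero S] (hS : IsZeroDivisorSemigroup S) :
    ¬ Nonempty (zdGraph S ≃g L) :=
  no_semigroup_for_Lmn_general m n k hm hn hk V L a b x c hainj hbinj hxinj hab hax hbx hcinj hc
    hcover hadj S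
end
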